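/- Bound on the total number of gradient steps (Theorem 4.1(ii), telescoping form): let Ψ^1, …, Ψ^N : ℝ^d → ℝ satisfy 0 ≤ Ψ^n(x) ≤ B for all x ∈ F and all n, let c, δ > 0, let x^1, …, x^N ∈ F with the convention x^0 := x^1, and let τ^1 := 0 and τ^2, …, τ^N be nonnegative reals such that F^{n−1}_w(x^n) − F^{n−1}_w(x^{n−1}) ≤ −τ^n · c · δ² for every 2 ≤ n ≤ N. Then Σ_{n=1}^{N} τ^n ≤ 2BN / (c δ² w). -/
import Mathlib


/-- Sliding-window time average `F^n_w(x) := (1/w) Σ_{i=0}^{w−1} Ψ^{n−i}(x)`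
(with the convention `Ψ^n ≡ 0` for `n ≤ 0`, imposed as a hypothesis below). -/
noncomputable def Fwin {d : ℕ} (Ψ : ℤ → EuclideanSpace ℝ (Fin d) → ℝ) (w : ℕ) (n : ℤ)
    (x : EuclideanSpace ℝ (Fin d)) : ℝ :=
  (1 / (w : ℝ)) * ∑ i ∈ Finset.range w, Ψ (n - i) x

lemma fwin_diff {d : ℕ} (Ψ : ℤ → EuclideanSpace ℝ (Fin d) → ℝ) (w : ℕ) (n : ℤ)
    (y : EuclideanSpace ℝ (Fin d)) :
    Fwin Ψ w n y - Fwin Ψ w (n-1) y = (1/(w:ℝ)) * (Ψ n y - Ψ (n - w) y) := by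
  unfold Fwin
  rw [← mul_sub, ← Finset.sum_sub_distrib]
  congr 1
  have h := Finset.sum_range_sub' (fun i : ℕ => Ψ (n - i) y) w
  simp only [Nat.cast_zero, sub_zero, Nat.cast_add, Nat.cast_one] at h
  rw [← h]
  exact Finset.sum_congr rfl fun i _ => by congr 2; ring

lemma fwin_nonneg {d : ℕ} (F : Set (EuclideanSpace ℝ (Fin d)))
    (Ψ : ℤ → EuclideanSpace ℝ (Fin d) → ℝ) (B : ℝ)
    (hbound : ∀ n : ℤ, ∀ x ∈ F, 0 ≤ Ψ n x ∧ Ψ n x ≤ B)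
    (w : ℕ) (n : ℤ) (y : EuclideanSpace ℝ (Fin d)) (hy : y ∈ F) :
    0 ≤ Fwin Ψ w n y := by
  unfold Fwin
  apply mul_nonneg (by positivity)
  exact Finset.sum_nonneg fun i _ => (hbound _ y hy).1

lemma fwin_one {d : ℕ} (Ψ : ℤ → EuclideanSpace ℝ (Fin d) → ℝ)
    (hzero : ∀ n : ℤ, n ≤ 0 → Ψ n = 0)
    (w : ℕ) (hw1 : 1 ≤ w) (y : EuclideanSpace ℝ (Fin d)) :
    Fwin Ψ w 1 y = (1/(w:ℝ)) * Ψ 1 y := by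
  unfold Fwin
  congr 1
  rw [Finset.sum_eq_single 0]
  · simp
  · intro i _ hi
    have : (1 : ℤ) - i ≤ 0 := by omega
    rw [hzero _ this]; simp
  · exact fun h => absurd (Finset.mem_range.mpr hw1) h

/-- bound on the total number of gradient steps
(Theorem 4.1(ii), telescoping form): `Σ_{n=1}^{N} τ^n ≤ 2BN / (c δ² w)`. -/
theorem stmt_13 {d : ℕ} (F : Set (EuclideanSpace ℝ (Fin d))) (hne : F.Nonempty)
    (hcomp : IsCompact F) (hconv : Convex ℝ F)
    (N : ℕ) (Ψ : ℤ → EuclideanSpace ℝ (Fin d) → ℝ)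
    (hzero : ∀ n : ℤ, n ≤ 0 → Ψ n = 0)
    (w : ℕ) (hw1 : 1 ≤ w) (hwN : w ≤ N)
    (B : ℝ) (hB : 0 < B)
    (hbound : ∀ n : ℤ, ∀ x ∈ F, 0 ≤ Ψ n x ∧ Ψ n x ≤ B)
    (c δ : ℝ) (hc : 0 < c) (hδ : 0 < δ)
    (x : ℤ → EuclideanSpace ℝ (Fin d)) (hxF : ∀ n : ℤ, 1 ≤ n → n ≤ (N : ℤ) → x n ∈ F)
    (hx0 : x 0 = x 1)
    (τ : ℤ → ℝ) (hτ1 : τ 1 = 0) (hτnonneg : ∀ n : ℤ, 2 ≤ n → n ≤ (N : ℤ) → 0 ≤ τ n)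
    (hdesc : ∀ n : ℤ, 2 ≤ n → n ≤ (N : ℤ) →
      Fwin Ψ w (n - 1) (x n) - Fwin Ψ w (n - 1) (x (n - 1)) ≤ -(τ n * c * δ ^ 2)) :
    ∑ n ∈ Finset.Icc (1 : ℤ) (N : ℤ), τ n ≤ 2 * B * N / (c * δ ^ 2 * w) := by
  have hw0 : (0:ℝ) < (w:ℝ) := by exact_mod_cast hw1
  have hN1 : 1 ≤ N := le_trans hw1 hwN
  -- key induction
  have key : ∀ m : ℕ, 1 ≤ m → (m:ℤ) ≤ (N:ℤ) →
      ∑ n ∈ Finset.Icc (1 : ℤ) (m : ℤ), τ n * (c * δ ^ 2)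
        ≤ (m:ℝ) * B / w - Fwin Ψ w m (x m) := by
    intro m
    induction m with
    | zero => intro h; omega
    | succ k ih =>
      intro _ hkN
      rcases Nat.eq_zero_or_pos k with hk0 | hk1
      · subst hk0
        have hx1 : x 1 ∈ F := hxF 1 le_rfl (by exact_mod_cast hN1)
        have hb := (hbound 1 (x 1) hx1).2
        simp only [Nat.zero_add, zero_add, Nat.cast_one, Finset.Icc_self, Finset.sum_singleton,
          hτ1, zero_mul, fwin_one Ψ hzero w hw1, one_mul]
        rw [div_eq_mul_inv, mul_comm B, ← one_div]
        nlinarith [one_div_pos.mpr hw0]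
      · have hkN' : (k:ℤ) ≤ (N:ℤ) := by push_cast at hkN ⊢; omega
        have ihk := ih hk1 hkN'
        have h2 : (2:ℤ) ≤ (k:ℤ)+1 := by exact_mod_cast Nat.succ_le_succ hk1
        have hkN2 : ((k:ℤ)+1) ≤ (N:ℤ) := by push_cast at hkN; omega
        have hdesck := hdesc ((k:ℤ)+1) h2 hkN2
        have hx1 : x ((k:ℤ)+1) ∈ F := hxF _ (by omega) hkN2
        have hdiff := fwin_diff Ψ w ((k:ℤ)+1) (x ((k:ℤ)+1))
        have hb1 := (hbound ((k:ℤ)+1) _ hx1).2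
        have hb2 := (hbound ((k:ℤ)+1 - w) _ hx1).1
        push_cast
        have hsum2 : Finset.Icc (1:ℤ) ((k:ℤ)+1) = insert ((k:ℤ)+1) (Finset.Icc (1:ℤ) (k:ℤ)) := by
          ext m; simp only [Finset.mem_Icc, Finset.mem_insert]; omega
        rw [hsum2, Finset.sum_insert (by simp)]
        have step : τ ((k:ℤ)+1) * (c * δ ^ 2)
            ≤ Fwin Ψ w k (x k) - Fwin Ψ w ((k:ℤ)+1) (x ((k:ℤ)+1)) + B / w := by
          have e1 : Fwin Ψ w ((k:ℤ)+1-1) (x ((k:ℤ)+1)) = Fwin Ψ w (k:ℤ) (x ((k:ℤ)+1)) := by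
            norm_num
          have e2 : Fwin Ψ w ((k:ℤ)+1-1) (x ((k:ℤ)+1-1)) = Fwin Ψ w (k:ℤ) (x (k:ℤ)) := by
            norm_num
          rw [e1, e2] at hdesck
          have hd2 : Fwin Ψ w ((k:ℤ)+1) (x ((k:ℤ)+1)) - Fwin Ψ w (k:ℤ) (x ((k:ℤ)+1))
              ≤ B / w := by
            have : Fwin Ψ w ((k:ℤ)+1) (x ((k:ℤ)+1)) - Fwin Ψ w ((k:ℤ)+1-1) (x ((k:ℤ)+1))
                = (1/(w:ℝ)) * (Ψ ((k:ℤ)+1) (x ((k:ℤ)+1)) - Ψ ((k:ℤ)+1 - w) (x ((k:ℤ)+1))) :=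
              fwin_diff Ψ w _ _
            rw [e1] at this
            rw [this, div_eq_mul_one_div B]
            nlinarith [one_div_pos.mpr hw0, hb1, hb2]
          nlinarith
        have := fwin_nonneg F Ψ B hbound w ((k:ℤ)+1) (x ((k:ℤ)+1)) hx1
        have hsplit : ((k:ℝ)+1) * B / w = (k:ℝ)*B/w + B/w := by ring
        linarith [ihk, step, this]
  have hkey := key N hN1 le_rfl
  have hFN : 0 ≤ Fwin Ψ w N (x N) :=
    fwin_nonneg F Ψ B hbound w N (x N) (hxF N (by exact_mod_cast hN1) le_rfl)
  have hsum : ∑ n ∈ Finset.Icc (1 : ℤ) (N : ℤ), τ n * (c * δ ^ 2)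
      = (∑ n ∈ Finset.Icc (1 : ℤ) (N : ℤ), τ n) * (c * δ ^ 2) := by
    rw [Finset.sum_mul]
  rw [hsum] at hkey
  have hcd : (0:ℝ) < c * δ ^ 2 := by positivity
  have h1 : (∑ n ∈ Finset.Icc (1 : ℤ) (N : ℤ), τ n) * (c * δ ^ 2) ≤ (N:ℝ) * B / w := by
    linarith
  rw [le_div_iff₀ (by positivity : (0:ℝ) < c * δ ^ 2 * w)]
  have h2 := mul_le_mul_of_nonneg_right h1 (le_of_lt hw0)
  rw [div_mul_cancel₀ _ (ne_of_gt hw0)] at h2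
  have hNB : (0:ℝ) ≤ (N:ℝ) * B := by positivity
  nlinarith [h2, hNB]
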